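/- arXiv:2006.12345 — 3 statements merged into one kernel-verified Lean document; each statement's English description precedes it below -/
import Mathlib

section
/- Let K and C_1, …, C_r be convex subsets of ℝ^N such that the union C = C_1 ∪ ⋯ ∪ C_r is itself convex. Then the convex hull of K ∪ C equals the union over i = 1, …, r of the convex hulls of K ∪ C_i. -/
/-!
If `K` and `U = ⋃ i, C i` are convex and nonempty, then `convexHull (K ∪ U)` is the convex join
of `K` and `U`, i.e. the union of the segments `[x, y]` with `x ∈ K`, `y ∈ U`. Each such segment
has `y` in some `C i`, so it lies in `convexHull (K ∪ C i)`. If `K` or `U` is empty the claim is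
immediate (for `U = ∅` one needs at least one index).
-/

open Set

section

variable {𝕜 E ι : Type*} [Field 𝕜] [LinearOrder 𝕜] [IsStrictOrderedRing 𝕜]
  [AddCommGroup E] [Module 𝕜 E]

theorem Convex.convexHull_union_iUnion_subset [Nonempty ι] {K : Set E} {C : ι → Set E}
    (hK : Convex 𝕜 K) (hU : Convex 𝕜 (⋃ i, C i)) :
    convexHull 𝕜 (K ∪ ⋃ i, C i) ⊆ ⋃ i, convexHull 𝕜 (K ∪ C i) := by
  rcases K.eq_empty_or_nonempty with rfl | hK₀
  · simp only [empty_union, hU.convexHull_eq]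
    exact iUnion_mono fun i => subset_convexHull 𝕜 _
  rcases (⋃ i, C i).eq_empty_or_nonempty with hU₀ | hU₀
  · rw [hU₀, union_empty, hK.convexHull_eq]
    exact subset_iUnion_of_subset (Classical.arbitrary ι)
      (subset_union_left.trans (subset_convexHull 𝕜 _))
  calc convexHull 𝕜 (K ∪ ⋃ i, C i) = ⋃ i, convexJoin 𝕜 K (C i) := by
        rw [hK.convexHull_union hU hK₀ hU₀, convexJoin_iUnion_right]
    _ ⊆ ⋃ i, convexHull 𝕜 (K ∪ C i) := iUnion_mono fun i => convexJoin_subset_convexHull _ _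

theorem Convex.convexHull_union_iUnion [Nonempty ι] {K : Set E} {C : ι → Set E}
    (hK : Convex 𝕜 K) (hU : Convex 𝕜 (⋃ i, C i)) :
    convexHull 𝕜 (K ∪ ⋃ i, C i) = ⋃ i, convexHull 𝕜 (K ∪ C i) :=
  (hK.convexHull_union_iUnion_subset hU).antisymm <|
    iUnion_subset fun i => convexHull_mono (union_subset_union_right K (subset_iUnion C i))

end

theorem stmt0_general {N : ℕ} (K : Set (Fin N → ℝ)) {r : ℕ} (hr : 0 < r)
    (C : Fin r → Set (Fin N → ℝ))
    (hK : Convex ℝ K) (hU : Convex ℝ (⋃ i, C i)) :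
    convexHull ℝ (K ∪ ⋃ i, C i) = ⋃ i, convexHull ℝ (K ∪ C i) :=
  haveI : Nonempty (Fin r) := ⟨⟨0, hr⟩⟩
  hK.convexHull_union_iUnion hU

theorem stmt0 {N : ℕ} (K : Set (Fin N → ℝ)) {r : ℕ} (hr : 0 < r)
    (C : Fin r → Set (Fin N → ℝ))
    (hK : Convex ℝ K) (hC : ∀ i, Convex ℝ (C i)) (hU : Convex ℝ (⋃ i, C i)) :
    convexHull ℝ (K ∪ ⋃ i, C i) = ⋃ i, convexHull ℝ (K ∪ C i) :=
  stmt0_general K hr C hK hU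
end

section
/- Let V = V_1 ⊕ ⋯ ⊕ V_k be a direct (internal) sum decomposition of a subspace of ℝ^N. For each i, let C^i_1, …, C^i_{r_i} be convex subsets of V_i such that the union ⋃_j C^i_j is convex. Then the convex hull of the union of all the sets C^i_j (over all i and j) equals the union, over all tuples (j_1, …, j_k) with j_i ∈ {1,…,r_i}, of the convex hulls conv(C^1_{j_1} ∪ ⋯ ∪ C^k_{j_k}). -/
/-!
Write `Uᵢ = ⋃ⱼ Cⁱⱼ`. Since each `Uᵢ` is convex, a convex combination of points of `⋃ᵢ Uᵢ`
can be regrouped as `∑ᵢ wᵢ uᵢ` with a single point `uᵢ ∈ Uᵢ` per index: the points lying in the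
same `Uᵢ` are replaced by their center of mass. Choosing `jᵢ` with `uᵢ ∈ Cⁱ_{jᵢ}` puts the
combination in `conv(C¹_{j₁} ∪ ⋯ ∪ Cᵏ_{jₖ})`.
-/

open Finset

theorem exists_sum_smul_eq_of_mem_convexHull_iUnion {𝕜 E ι : Type*} [Field 𝕜] [LinearOrder 𝕜]
    [IsStrictOrderedRing 𝕜] [AddCommGroup E] [Module 𝕜 E] {A : ι → Set E}
    (hA : ∀ i, Convex 𝕜 (A i)) {x : E} (hx : x ∈ convexHull 𝕜 (⋃ i, A i)) :
    ∃ (t : Finset ι) (w : ι → 𝕜) (a : ι → E), (∀ i ∈ t, 0 ≤ w i) ∧ ∑ i ∈ t, w i = 1 ∧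
      (∀ i ∈ t, a i ∈ A i) ∧ ∑ i ∈ t, w i • a i = x := by
  classical
  obtain ⟨κ, _, v, z, hv₀, hv₁, hz, rfl⟩ := mem_convexHull_iff_exists_fintype.1 hx
  choose f hf using fun l => Set.mem_iUnion.1 (hz l)
  set s := univ.filter fun l => v l ≠ 0
  set fiber : ι → Finset κ := fun i => s.filter fun l => f l = i
  have hfiber_pos : ∀ i ∈ s.image f, 0 < ∑ l ∈ fiber i, v l := by
    simp only [mem_image]
    rintro i ⟨l, hl, rfl⟩
    refine sum_pos' (fun l _ => hv₀ l) ⟨l, by simp [fiber, hl], ?_⟩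
    exact (hv₀ l).lt_of_ne' (mem_filter.1 hl).2
  refine ⟨s.image f, fun i => ∑ l ∈ fiber i, v l, fun i => (fiber i).centerMass v z,
    fun i hi => (hfiber_pos i hi).le, ?_, fun i hi => ?_, ?_⟩
  · rw [sum_fiberwise_of_maps_to (fun l hl => mem_image_of_mem f hl), sum_filter_ne_zero, hv₁]
  · refine (hA i).centerMass_mem (fun l _ => hv₀ l) (hfiber_pos i hi) fun l hl => ?_
    simpa [(mem_filter.1 hl).2] using hf l
  · calc ∑ i ∈ s.image f, (∑ l ∈ fiber i, v l) • (fiber i).centerMass v z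
        = ∑ i ∈ s.image f, ∑ l ∈ fiber i, v l • z l :=
          sum_congr rfl fun i hi => smul_inv_smul₀ (hfiber_pos i hi).ne' _
      _ = ∑ l, v l • z l := by
          rw [sum_fiberwise_of_maps_to (fun l hl => mem_image_of_mem f hl)]
          exact sum_filter_of_ne fun l _ h => left_ne_zero_of_smul h

theorem stmt1_general {N k : ℕ}
    (r : Fin k → ℕ) (hr : ∀ i, 0 < r i)
    (C : ∀ i : Fin k, Fin (r i) → Set (Fin N → ℝ))
    (hUconv : ∀ i, Convex ℝ (⋃ j, C i j)) :
    convexHull ℝ (⋃ i, ⋃ j, C i j) =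
      ⋃ j : (∀ i : Fin k, Fin (r i)), convexHull ℝ (⋃ i, C i (j i)) := by
  refine subset_antisymm (fun x hx => ?_) <| Set.iUnion_subset fun j =>
    convexHull_mono <| Set.iUnion_mono fun i => Set.subset_iUnion _ (j i)
  obtain ⟨t, w, a, hw₀, hw₁, ha, rfl⟩ := exists_sum_smul_eq_of_mem_convexHull_iUnion hUconv hx
  have hj : ∀ i, ∃ j, i ∈ t → a i ∈ C i j := fun i =>
    if hi : i ∈ t then (Set.mem_iUnion.1 (ha i hi)).imp fun _ h _ => h
    else ⟨⟨0, hr i⟩, fun h => (hi h).elim⟩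
  choose j hj using hj
  exact Set.mem_iUnion.2 ⟨j, (convex_convexHull ℝ _).sum_mem hw₀ hw₁ fun i hi =>
    subset_convexHull ℝ _ (Set.mem_iUnion.2 ⟨i, hj i hi⟩)⟩

theorem stmt1 {N k : ℕ} (V : Submodule ℝ (Fin N → ℝ)) (Vi : Fin k → Submodule ℝ (Fin N → ℝ))
    (hV : V = ⨆ i, Vi i) (hindep : iSupIndep Vi)
    (r : Fin k → ℕ) (hr : ∀ i, 0 < r i)
    (C : ∀ i : Fin k, Fin (r i) → Set (Fin N → ℝ))
    (hsub : ∀ i j, C i j ⊆ (Vi i : Set (Fin N → ℝ)))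
    (hconv : ∀ i j, Convex ℝ (C i j))
    (hUconv : ∀ i, Convex ℝ (⋃ j, C i j)) :
    convexHull ℝ (⋃ i, ⋃ j, C i j) =
      ⋃ j : (∀ i : Fin k, Fin (r i)), convexHull ℝ (⋃ i, C i (j i)) :=
  stmt1_general r hr C hUconv
end

section
/- Let f be a homeomorphism of a compact metric space X, and let U be an open neighbourhood of the non-wandering set Ω(f). Then there exists a positive integer κ such that for every x ∈ X, the set of integers n ∈ ℤ with f^n(x) ∉ U has cardinality less than κ. -/
/-!
Every point outside `Ω(f)` has a wandering neighbourhood `W`, i.e. one with `f^n(W) ∩ W = ∅`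
for all `n ≥ 1`, and an orbit of a homeomorphism meets such a `W` at most once. The closed
complement of `U` is compact and disjoint from `Ω(f)`, so it is covered by finitely many
wandering neighbourhoods, say `κ - 1` of them; hence every orbit spends fewer than `κ` times
outside `U`.
-/

/-- The non-wandering set of a map: points every neighbourhood of which returns to itself
under some positive iterate. -/
def nonWanderingSet {X : Type*} [TopologicalSpace X] (f : X → X) : Set X :=
  {x | ∀ U ∈ nhds x, ∃ n ≥ 1, ∃ y ∈ U, f^[n] y ∈ U}

open Topology

def IsWandering {α : Type*} (f : α → α) (W : Set α) : Prop :=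
  ∀ n ≥ 1, ∀ y ∈ W, f^[n] y ∉ W

theorem exists_isWandering_mem_nhds_of_notMem_nonWanderingSet {X : Type*} [TopologicalSpace X]
    {f : X → X} {x : X} (hx : x ∉ nonWanderingSet f) : ∃ W ∈ 𝓝 x, IsWandering f W := by
  simpa [nonWanderingSet, IsWandering] using hx

theorem IsCompact.exists_finite_isWandering_cover {X : Type*} [TopologicalSpace X]
    {f : X → X} {K : Set X} (hK : IsCompact K) (hKΩ : Disjoint K (nonWanderingSet f)) :
    ∃ (t : Finset X) (W : X → Set X), (∀ a ∈ t, IsWandering f (W a)) ∧ K ⊆ ⋃ a ∈ t, W a := by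
  have hwand : ∀ x ∈ K, ∃ W ∈ 𝓝 x, IsWandering f W := fun x hx =>
    exists_isWandering_mem_nhds_of_notMem_nonWanderingSet (hKΩ.notMem_of_mem_left hx)
  choose! W hW_nhds hW using hwand
  obtain ⟨t, htK, hcover⟩ := hK.elim_nhds_subcover W hW_nhds
  exact ⟨t, W, fun a ha => hW a (htK a ha), hcover⟩

theorem IsWandering.subsingleton_setOf_zpow_apply_mem {α : Type*} {σ : Equiv.Perm α}
    {W : Set α} (hW : IsWandering σ W) (x : α) : {n : ℤ | (σ ^ n) x ∈ W}.Subsingleton := by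
  have no_return : ∀ m n : ℤ, m < n → (σ ^ m) x ∈ W → (σ ^ n) x ∉ W := by
    intro m n hmn hm
    obtain ⟨k, rfl⟩ : ∃ k : ℕ, n = (k + 1 : ℕ) + m := ⟨(n - m - 1).toNat, by omega⟩
    rw [zpow_add, Equiv.Perm.mul_apply, zpow_natCast, Equiv.Perm.coe_pow]
    exact hW (k + 1) (Nat.le_add_left 1 k) _ hm
  intro m hm n hn
  by_contra hne
  rcases lt_or_gt_of_ne hne with hlt | hlt
  exacts [no_return m n hlt hm hn, no_return n m hlt hn hm]

theorem Set.finite_and_ncard_le_of_subset_biUnion_subsingleton {ι α : Type*} {t : Finset ι}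
    {A : ι → Set α} {S : Set α} (hA : ∀ i ∈ t, (A i).Subsingleton) (hS : S ⊆ ⋃ i ∈ t, A i) :
    S.Finite ∧ S.ncard ≤ t.card := by
  have hfin : (⋃ i ∈ t, A i).Finite := t.finite_toSet.biUnion fun i hi => (hA i hi).finite
  refine ⟨hfin.subset hS, ?_⟩
  calc S.ncard ≤ (⋃ i ∈ t, A i).ncard := Set.ncard_le_ncard hS hfin
    _ ≤ ∑ i ∈ t, (A i).ncard := t.set_ncard_biUnion_le A
    _ ≤ ∑ _i ∈ t, 1 := Finset.sum_le_sum fun i hi =>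
      (Set.ncard_le_one (hA i hi).finite).mpr fun a ha b hb => hA i hi ha hb
    _ = t.card := by simp

theorem stmt6 {X : Type*} [MetricSpace X] [CompactSpace X] (f : X ≃ₜ X)
    (U : Set X) (hU : IsOpen U) (hΩ : nonWanderingSet ⇑f ⊆ U) :
    ∃ κ : ℕ, 0 < κ ∧ ∀ x : X,
      {n : ℤ | ((f.toEquiv ^ n : Equiv.Perm X) x) ∉ U}.Finite ∧
      {n : ℤ | ((f.toEquiv ^ n : Equiv.Perm X) x) ∉ U}.ncard < κ := by
  obtain ⟨t, W, hW, hcover⟩ := hU.isClosed_compl.isCompact.exists_finite_isWandering_cover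
    (Set.disjoint_compl_left_iff_subset.mpr hΩ)
  refine ⟨t.card + 1, t.card.succ_pos, fun x => ?_⟩
  have hvisits : {n : ℤ | (f.toEquiv ^ n) x ∉ U} ⊆ ⋃ a ∈ t, {n : ℤ | (f.toEquiv ^ n) x ∈ W a} :=
    fun n hn => by simpa using hcover hn
  obtain ⟨hfin, hcard⟩ := Set.finite_and_ncard_le_of_subset_biUnion_subsingleton
    (fun a ha => (hW a ha).subsingleton_setOf_zpow_apply_mem x) hvisits
  exact ⟨hfin, Nat.lt_succ_of_le hcard⟩
end
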